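/- arXiv:2107.07510 — 3 statements merged into one kernel-verified Lean document; each statement's English description precedes it below -/
import Mathlib

section
/- (Optimality equation for the value function of a finite-horizon semi-Markov stopping problem.) Let $Q$ be a semi-Markov kernel on $\mathbb{R}_+\times E$ satisfying $Q(\delta,E|x)\le 1-\epsilon$ for some $\delta,\epsilon>0$ and all $x$, and let $c,g:E\to[0,\infty)$ be measurable. Define the operator $\mathbb{G}$ on measurable $u:[0,T]\times E\to[0,\infty]$ by $\mathbb{G}u(s,x)=\min\{c(x)\int_0^s(1-Q(t,E|x))dt+\int_E\int_{[0,s]}u(s-t,y)\,Q(dt,dy|x),\ g(x)\}$. Set $V_0^*:=0$ and $V_{n+1}^*:=\mathbb{G}V_n^*$. Then $V^*:=\lim_{n\to\infty}V_n^*$ exists pointwise (the sequence is nondecreasing) and satisfies $V^*=\mathbb{G}V^*$. -/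
open MeasureTheory Filter Set ProbabilityTheory
open scoped ENNReal NNReal

/-- For the optimal stopping operator
`𝔾 u (s,x) = min { c x ∫₀ˢ (1 - Q(t,E|x)) dt + ∫_E ∫_{[0,s]} u (s-t, y) Q(dt,dy|x), g x }`
of a finite-horizon semi-Markov stopping problem (with `Q` a semi-Markov kernel viewed as a
kernel `x ↦ Q x ∈ Measure (ℝ × E)` on time-state pairs, `Q(t,E|x) = Q x ((-∞,t] × E)`),
the value-iteration sequence `V 0 = 0`, `V (n+1) = 𝔾 (V n)` is pointwise nondecreasing, so
`V* = lim_n V n = ⨆ n, V n` exists, and `V*` satisfies the optimality equation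
`V* = 𝔾 V*` on `[0,T] × E`. -/
theorem stopping_value_iteration_fixed_point
    {E : Type*} [MeasurableSpace E]
    (Q : E → Measure (ℝ × E))
    (hQmeas : Measurable Q)
    (hQsupp : ∀ x, Q x (Set.Iio 0 ×ˢ Set.univ) = 0)
    (hQstoch : ∀ x, IsProbabilityMeasure (Q x))
    (δ : ℝ) (ε : ℝ≥0∞) (hδ : 0 < δ) (hε : 0 < ε)
    (hass : ∀ x, Q x (Set.Iic δ ×ˢ Set.univ) ≤ 1 - ε)
    (c g : E → ℝ≥0∞) (hc : Measurable c) (hg : Measurable g)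
    (hc' : ∀ x, c x ≠ ⊤) (hg' : ∀ x, g x ≠ ⊤)
    (T : ℝ) (hT : 0 < T)
    (𝔾 : ((ℝ × E) → ℝ≥0∞) → ((ℝ × E) → ℝ≥0∞))
    (h𝔾 : ∀ u (s : ℝ) (x : E), 𝔾 u (s, x) =
      min
        (c x * (∫⁻ t in Set.Ioc (0 : ℝ) s, (1 - Q x (Set.Iic t ×ˢ Set.univ))) +
          ∫⁻ p in Set.Icc (0 : ℝ) s ×ˢ (Set.univ : Set E), u (s - p.1, p.2) ∂(Q x))
        (g x))
    (V : ℕ → (ℝ × E) → ℝ≥0∞)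
    (hV0 : V 0 = 0) (hVrec : ∀ n, V (n + 1) = 𝔾 (V n)) :
    (∀ n p, V n p ≤ V (n + 1) p) ∧
      ∀ s ∈ Set.Icc (0 : ℝ) T, ∀ x : E,
        (⨆ n, V n (s, x)) = 𝔾 (fun p => ⨆ n, V n p) (s, x) := by
  classical
  -- package `Q` as a kernel
  set κ : Kernel E (ℝ × E) := ⟨Q, hQmeas⟩ with hκdef
  haveI : IsMarkovKernel κ := ⟨hQstoch⟩
  have hκ : ∀ x, κ x = Q x := fun _ => rfl
  set κ' : Kernel (ℝ × E) (ℝ × E) := ⟨fun p => Q p.2, hQmeas.comp measurable_snd⟩ with hκ'def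
  haveI : IsMarkovKernel κ' := ⟨fun p => hQstoch p.2⟩
  have hκ' : ∀ p : ℝ × E, κ' p = Q p.2 := fun _ => rfl
  -- measurability of `(x, t) ↦ Q x (Iic t ×ˢ univ)`
  have hF : Measurable fun q : E × ℝ => Q q.1 (Set.Iic q.2 ×ˢ (Set.univ : Set E)) := by
    have ht : MeasurableSet {q : (E × ℝ) × (ℝ × E) | q.2.1 ≤ q.1.2} :=
      measurableSet_le measurable_snd.fst measurable_fst.snd
    have h := Kernel.measurable_kernel_prodMk_left
      (κ := κ.comap (Prod.fst : E × ℝ → E) measurable_fst) ht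
    convert h using 1
    funext a
    rw [Kernel.comap_apply, hκ]
    congr 1
    ext b
    simp [Set.mem_preimage]
  -- `𝔾` preserves measurability
  have hG : ∀ u : ℝ × E → ℝ≥0∞, Measurable u → Measurable (𝔾 u) := by
    intro u hu
    have heq : 𝔾 u = fun p : ℝ × E =>
        min (c p.2 * (∫⁻ t in Set.Ioc (0 : ℝ) p.1, (1 - Q p.2 (Set.Iic t ×ˢ Set.univ))) +
          ∫⁻ q in Set.Icc (0 : ℝ) p.1 ×ˢ (Set.univ : Set E), u (p.1 - q.1, q.2) ∂(Q p.2))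
          (g p.2) := funext fun p => by rw [← h𝔾 u p.1 p.2]
    rw [heq]
    apply Measurable.min _ (hg.comp measurable_snd)
    apply Measurable.add
    · apply (hc.comp measurable_snd).mul
      have hrw : ∀ p : ℝ × E,
          (∫⁻ t in Set.Ioc (0 : ℝ) p.1, (1 - Q p.2 (Set.Iic t ×ˢ Set.univ))) =
          ∫⁻ t, Set.indicator (Set.Ioc (0 : ℝ) p.1)
            (fun t => 1 - Q p.2 (Set.Iic t ×ˢ Set.univ)) t := fun p =>
        (lintegral_indicator measurableSet_Ioc _).symm
      simp_rw [hrw, Set.indicator_apply]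
      have hjoint : Measurable fun q : (ℝ × E) × ℝ => if q.2 ∈ Set.Ioc (0 : ℝ) q.1.1
          then 1 - Q q.1.2 (Set.Iic q.2 ×ˢ Set.univ) else 0 := by
        refine Measurable.ite ?_ ?_ measurable_const
        · simp only [Set.mem_Ioc, Set.setOf_and]
          exact (measurableSet_lt measurable_const measurable_snd).inter
            (measurableSet_le measurable_snd measurable_fst.fst)
        · exact measurable_const.sub (hF.comp (measurable_fst.snd.prodMk measurable_snd))
      exact hjoint.lintegral_prod_right'
    · -- the integral term
      have hrw : ∀ p : ℝ × E,
          (∫⁻ q in Set.Icc (0 : ℝ) p.1 ×ˢ (Set.univ : Set E), u (p.1 - q.1, q.2) ∂(Q p.2)) =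
          ∫⁻ q, Set.indicator (Set.Icc (0 : ℝ) p.1 ×ˢ (Set.univ : Set E))
            (fun q : ℝ × E => u (p.1 - q.1, q.2)) q
            ∂(κ' p) := fun p => by
        rw [hκ', lintegral_indicator (measurableSet_Icc.prod MeasurableSet.univ)]
      simp_rw [hrw, Set.indicator_apply]
      have hjoint : Measurable fun q : (ℝ × E) × (ℝ × E) =>
          if q.2 ∈ Set.Icc (0 : ℝ) q.1.1 ×ˢ (Set.univ : Set E)
          then u (q.1.1 - q.2.1, q.2.2) else 0 := by
        refine Measurable.ite ?_ ?_ measurable_const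
        · simp only [Set.mem_prod, Set.mem_Icc, Set.mem_univ, and_true, Set.setOf_and]
          exact (measurableSet_le measurable_const measurable_snd.fst).inter
            (measurableSet_le measurable_snd.fst measurable_fst.fst)
        · exact hu.comp ((measurable_fst.fst.sub measurable_snd.fst).prodMk measurable_snd.snd)
      exact hjoint.lintegral_kernel_prod_right'
  -- measurability of the iterates
  have hVmeas : ∀ n, Measurable (V n) := by
    intro n
    induction n with
    | zero => rw [hV0]; exact measurable_const
    | succ n ih => rw [hVrec]; exact hG _ ih
  -- monotonicity of `𝔾`
  have hGmono : ∀ u v : (ℝ × E) → ℝ≥0∞, (∀ p, u p ≤ v p) → ∀ p, 𝔾 u p ≤ 𝔾 v p := by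
    rintro u v huv ⟨s, x⟩
    rw [h𝔾, h𝔾]
    refine min_le_min (add_le_add_right (lintegral_mono fun q => huv _) _) le_rfl
  -- monotonicity of the iterates
  have hVmono : ∀ n p, V n p ≤ V (n + 1) p := by
    intro n
    induction n with
    | zero => intro p; rw [hV0]; exact zero_le
    | succ n ih =>
      intro p
      rw [hVrec, hVrec]
      exact hGmono _ _ ih p
  refine ⟨hVmono, fun s _ x => ?_⟩
  -- the supremum over `n` equals the supremum over `n+1`
  have hshift : (⨆ n, V n (s, x)) = ⨆ n, V (n + 1) (s, x) :=
    le_antisymm (iSup_le fun n => le_trans (hVmono n _) (le_iSup (fun n => V (n + 1) (s, x)) n))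
      (iSup_le fun n => le_iSup (fun n => V n (s, x)) (n + 1))
  rw [hshift]
  simp_rw [hVrec, h𝔾]
  -- pull the supremum through `min`, `+` and the integral
  rw [← iSup_inf_eq]
  congr 1
  rw [← ENNReal.add_iSup]
  congr 1
  have hVle : ∀ m n : ℕ, m ≤ n → ∀ p, V m p ≤ V n p := fun m n h p =>
    monotone_nat_of_le_succ (fun k => hVmono k p) h
  exact (lintegral_iSup (f := fun n (p : ℝ × E) => V n (s - p.1, p.2))
    (fun n => (hVmeas n).comp ((measurable_const.sub measurable_fst).prodMk measurable_snd))
    (fun m n hmn q => hVle m n hmn _)).symm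
end

section
/- (Reduction to randomized Markov policies, one-dimensional distribution matching.) Let $(\hat X_n, A_n, \hat S_n)$ be the state, action and jump-time process of a semi-Markov decision process under an arbitrary policy $\pi$ with initial data $(s,x)$, and define a randomized Markov policy $\hat\pi=\{\varphi_n\}$ by $\varphi_n(a|t,y):=\mathbb{E}^{\pi}_{(s,x)}[\mathbf{1}_{\{A_n=a\}}\mid \hat S_n=s-t,\hat X_n=y]$ for $t\le s$ (and uniform on $A(y)$ otherwise). Then for all $n\ge 0$, Borel $B$, actions $a$, and $t\ge 0$: $\mathbb{P}^{\pi}_{(s,x)}(\hat X_n\in B, A_n=a, \hat S_n\le t)=\mathbb{P}^{\hat\pi}_{(s,x)}(\hat X_n\in B, A_n=a, \hat S_n\le t)$. -/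
open MeasureTheory Filter Set
open scoped ENNReal NNReal

open scoped Topology

private lemma ext_prod_real {E : Type*} [MeasurableSpace E]
    (μ ν : Measure (ℝ × E)) [IsProbabilityMeasure μ] [IsProbabilityMeasure ν]
    (h : ∀ t : ℝ, ∀ B : Set E, MeasurableSet B → μ (Set.Iic t ×ˢ B) = ν (Set.Iic t ×ˢ B)) :
    μ = ν := by
  have hC : MeasurableSpace.generateFrom (Set.range (Set.Iic : ℝ → Set ℝ)) =
      (inferInstance : MeasurableSpace ℝ) := by
    rw [BorelSpace.measurable_eq (α := ℝ), borel_eq_generateFrom_Iic ℝ]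
  have h2C : IsCountablySpanning (Set.range (Set.Iic : ℝ → Set ℝ)) := by
    refine ⟨fun n => Set.Iic (n : ℝ), fun n => ⟨n, rfl⟩, ?_⟩
    ext y; simp only [Set.mem_iUnion, Set.mem_Iic, Set.mem_univ, iff_true]
    exact exists_nat_ge y
  have hgen := generateFrom_eq_prod (C := Set.range (Set.Iic : ℝ → Set ℝ))
    (D := {B : Set E | MeasurableSet B}) hC MeasurableSpace.generateFrom_measurableSet
    h2C isCountablySpanning_measurableSet
  refine ext_of_generate_finite _ hgen.symm
    (isPiSystem_Iic.prod MeasurableSpace.isPiSystem_measurableSet) ?_ (by simp)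
  rintro _ ⟨_, ⟨t, rfl⟩, B, hB, rfl⟩
  exact h t B hB

/-- Dyadic lower approximation of a real number. -/
private noncomputable def dy (m : ℕ) (u : ℝ) : ℝ := (⌊(2 : ℝ) ^ m * u⌋ : ℝ) / 2 ^ m

private lemma dy_le (m : ℕ) (u : ℝ) : dy m u ≤ u := by
  rw [dy, div_le_iff₀ (by positivity)]
  calc ((⌊(2 : ℝ) ^ m * u⌋ : ℝ)) ≤ (2 : ℝ) ^ m * u := Int.floor_le _
  _ = u * 2 ^ m := by ring

private lemma lt_dy_add (m : ℕ) (u : ℝ) : u < dy m u + (1 / 2) ^ m := by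
  have h := Int.lt_floor_add_one ((2 : ℝ) ^ m * u)
  rw [dy]
  rw [show ((1 : ℝ) / 2) ^ m = 1 / 2 ^ m by rw [div_pow]; norm_num]
  rw [← add_div, lt_div_iff₀ (by positivity : (0:ℝ) < 2 ^ m)]
  nlinarith [h]

private lemma dy_mono (m : ℕ) (u : ℝ) : dy m u ≤ dy (m + 1) u := by
  have h2 : ((2 : ℤ) * ⌊(2 : ℝ) ^ m * u⌋ : ℤ) ≤ ⌊(2 : ℝ) ^ (m + 1) * u⌋ := by
    rw [Int.le_floor]
    push_cast
    have h := Int.floor_le ((2 : ℝ) ^ m * u)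
    calc (2 : ℝ) * (⌊(2 : ℝ) ^ m * u⌋ : ℝ) ≤ 2 * ((2 : ℝ) ^ m * u) := by linarith
    _ = (2 : ℝ) ^ (m + 1) * u := by ring
  rw [dy, dy, div_le_div_iff₀ (by positivity) (by positivity)]
  have : ((2 : ℤ) * ⌊(2 : ℝ) ^ m * u⌋ : ℝ) ≤ (⌊(2 : ℝ) ^ (m + 1) * u⌋ : ℝ) := by
    exact_mod_cast h2
  push_cast at this ⊢
  have h3 : (0:ℝ) ≤ 2 ^ m := by positivity
  calc (⌊(2 : ℝ) ^ m * u⌋ : ℝ) * 2 ^ (m + 1) = (2 * (⌊(2 : ℝ) ^ m * u⌋ : ℝ)) * 2 ^ m := by ring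
  _ ≤ (⌊(2 : ℝ) ^ (m + 1) * u⌋ : ℝ) * 2 ^ m := mul_le_mul_of_nonneg_right this h3

private lemma dy_monotone (u : ℝ) : Monotone fun m : ℕ => dy m u :=
  monotone_nat_of_le_succ fun m => dy_mono m u

private lemma measurable_dy_comp {Ω : Type*} {m' : MeasurableSpace Ω} {f : Ω → ℝ}
    (hf : Measurable f) (m : ℕ) : Measurable fun ω => (⌊(2 : ℝ) ^ m * f ω⌋ : ℤ) :=
  Int.measurable_floor.comp (hf.const_mul _)


/-- (Reduction to randomized Markov policies.) Let `P` be the law of the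
SMDP `(X̂ n, A n, Ŝ n)` under an arbitrary policy with initial data `(s, x)`, and let `P'`
be the law under the randomized Markov policy `φ` defined by
`φ n a (t, y) = E^P[𝟙{A n = a} | Ŝ n = s - t, X̂ n = y]`.  Then the one-dimensional joint
distributions coincide: `P(X̂ n ∈ B, A n = a, Ŝ n ≤ t) = P'(X̂ n ∈ B, A n = a, Ŝ n ≤ t)`
for all `n`, Borel `B`, actions `a` and `t`. -/
theorem markov_policy_sufficiency
    {Ehat A Ω : Type*} [MeasurableSpace Ehat] [MeasurableSpace Ω]
    [Countable A] [MeasurableSpace A] [MeasurableSingletonClass A]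
    -- the semi-Markov kernel of the SMDP: `Qhat t x a B = Q̂(t, B | x, a)`
    (Qhat : ℝ → Ehat → A → Measure Ehat)
    (hQmeas : ∀ t, Measurable fun p : Ehat × A => Qhat t p.1 p.2)
    (hQsub : ∀ t x a, Qhat t x a Set.univ ≤ 1)
    -- the processes: sojourn times `T n`, states `X n`, actions `Act n`
    (T : ℕ → Ω → ℝ) (X : ℕ → Ω → Ehat) (Act : ℕ → Ω → A)
    (hT : ∀ n, Measurable (T n)) (hX : ∀ n, Measurable (X n))
    (hAct : ∀ n, Measurable (Act n))
    (S : ℕ → Ω → ℝ) (hS : ∀ n ω, S n ω = ∑ k ∈ Finset.range (n + 1), T k ω)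
    -- the full-history σ-algebras `σ(Ŷ n, A n)`
    (G : ℕ → MeasurableSpace Ω)
    (hG : ∀ n, G n = ⨆ k ∈ Finset.range (n + 1),
      (MeasurableSpace.comap (T k) inferInstance ⊔ MeasurableSpace.comap (X k) inferInstance
        ⊔ MeasurableSpace.comap (Act k) inferInstance))
    -- the history σ-algebras `σ(Ŷ n)` (actions only up to time `n - 1`)
    (G' : ℕ → MeasurableSpace Ω)
    (hG' : ∀ n, G' n =
      (⨆ k ∈ Finset.range (n + 1),
        (MeasurableSpace.comap (T k) inferInstance ⊔ MeasurableSpace.comap (X k) inferInstance))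
        ⊔ ⨆ k ∈ Finset.range n, MeasurableSpace.comap (Act k) inferInstance)
    -- initial data
    (s : ℝ) (x : Ehat)
    (P P' : Measure Ω) [IsProbabilityMeasure P] [IsProbabilityMeasure P']
    (hinit : P {ω | T 0 ω = 0 ∧ X 0 ω = x} = 1)
    (hinit' : P' {ω | T 0 ω = 0 ∧ X 0 ω = x} = 1)
    -- both laws have transition mechanism `Q̂` given the history and current action
    (hker : ∀ n t B, MeasurableSet B → ∀ D, MeasurableSet[G n] D →
      P (D ∩ {ω | T (n + 1) ω ≤ t ∧ X (n + 1) ω ∈ B}) =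
        ∫⁻ ω in D, Qhat t (X n ω) (Act n ω) B ∂P)
    (hker' : ∀ n t B, MeasurableSet B → ∀ D, MeasurableSet[G n] D →
      P' (D ∩ {ω | T (n + 1) ω ≤ t ∧ X (n + 1) ω ∈ B}) =
        ∫⁻ ω in D, Qhat t (X n ω) (Act n ω) B ∂P')
    -- the randomized Markov policy `φ`
    (φ : ℕ → A → ℝ × Ehat → ℝ≥0∞)
    (hφmeas : ∀ n a, Measurable (φ n a))
    -- `φ n a (t, y)` is a conditional probability of `{Act n = a}` given `(Ŝ n, X̂ n)`
    -- under `P` (evaluated at remaining horizon `t = s - Ŝ n`)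
    (hφdef : ∀ n a, ∀ D, MeasurableSet[MeasurableSpace.comap
        (fun ω => (S n ω, X n ω)) inferInstance] D →
      P (D ∩ {ω | Act n ω = a}) = ∫⁻ ω in D, φ n a (s - S n ω, X n ω) ∂P)
    -- under `P'`, actions are chosen by the Markov policy `φ` given the whole history
    (hφ' : ∀ n a, ∀ D, MeasurableSet[G' n] D →
      P' (D ∩ {ω | Act n ω = a}) = ∫⁻ ω in D, φ n a (s - S n ω, X n ω) ∂P') :
    ∀ (n : ℕ) (B : Set Ehat), MeasurableSet B → ∀ (a : A) (t : ℝ),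
      P {ω | X n ω ∈ B ∧ Act n ω = a ∧ S n ω ≤ t} =
        P' {ω | X n ω ∈ B ∧ Act n ω = a ∧ S n ω ≤ t} := by
  classical
  -- measurability of the cumulative sums `S n`
  have hSm : ∀ n, Measurable (S n) := by
    intro n
    have h : S n = fun ω => ∑ k ∈ Finset.range (n + 1), T k ω := funext (hS n)
    rw [h]; exact Finset.measurable_sum _ fun k _ => hT k
  set SX : ℕ → Ω → ℝ × Ehat := fun n ω => (S n ω, X n ω) with hSXdef
  have hSXm : ∀ n, Measurable (SX n) := fun n => (hSm n).prodMk (hX n)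
  -- G n measurability of the processes up to time n
  have hTGn : ∀ n k, k ≤ n → Measurable[G n] (T k) := by
    intro n k hk
    rw [measurable_iff_comap_le, hG n]
    refine le_iSup_of_le k (le_iSup_of_le (Finset.mem_range.mpr (Nat.lt_succ_of_le hk)) ?_)
    exact le_sup_of_le_left le_sup_left
  have hXGn : ∀ n, Measurable[G n] (X n) := by
    intro n
    rw [measurable_iff_comap_le, hG n]
    refine le_iSup_of_le n (le_iSup_of_le (Finset.mem_range.mpr (Nat.lt_succ_self n)) ?_)
    exact le_sup_of_le_left le_sup_right
  have hSGn : ∀ n, Measurable[G n] (S n) := by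
    intro n
    have h : S n = fun ω => ∑ k ∈ Finset.range (n + 1), T k ω := funext (hS n)
    rw [h]
    exact Finset.measurable_sum _ fun k hk =>
      hTGn n k (Nat.lt_succ_iff.mp (Finset.mem_range.mp hk))
  -- G' n measurability
  have hTG'n : ∀ n k, k ≤ n → Measurable[G' n] (T k) := by
    intro n k hk
    rw [measurable_iff_comap_le, hG' n]
    refine le_sup_of_le_left ?_
    refine le_iSup_of_le k (le_iSup_of_le (Finset.mem_range.mpr (Nat.lt_succ_of_le hk)) ?_)
    exact le_sup_left
  have hXG'n : ∀ n, Measurable[G' n] (X n) := by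
    intro n
    rw [measurable_iff_comap_le, hG' n]
    refine le_sup_of_le_left ?_
    refine le_iSup_of_le n (le_iSup_of_le (Finset.mem_range.mpr (Nat.lt_succ_self n)) ?_)
    exact le_sup_right
  have hSG'n : ∀ n, Measurable[G' n] (S n) := by
    intro n
    have h : S n = fun ω => ∑ k ∈ Finset.range (n + 1), T k ω := funext (hS n)
    rw [h]
    exact Finset.measurable_sum _ fun k hk =>
      hTG'n n k (Nat.lt_succ_iff.mp (Finset.mem_range.mp hk))
  have hSXG' : ∀ n, Measurable[G' n] (SX n) := fun n =>
    Measurable.prodMk (hSG'n n) (hXG'n n)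
  -- the policy step
  have stepφ : ∀ n, P.map (SX n) = P'.map (SX n) →
      ∀ a, (P.restrict {ω | Act n ω = a}).map (SX n) =
           (P'.restrict {ω | Act n ω = a}).map (SX n) := by
    intro n hmap a
    have hg : Measurable fun p : ℝ × Ehat => φ n a (s - p.1, p.2) :=
      (hφmeas n a).comp ((measurable_const.sub measurable_fst).prodMk measurable_snd)
    ext C hC
    have hpre : MeasurableSet (SX n ⁻¹' C) := hSXm n hC
    rw [Measure.map_apply (hSXm n) hC, Measure.map_apply (hSXm n) hC,
        Measure.restrict_apply hpre, Measure.restrict_apply hpre]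
    have hDc : MeasurableSet[MeasurableSpace.comap
        (fun ω => (S n ω, X n ω)) inferInstance] (SX n ⁻¹' C) := ⟨C, hC, rfl⟩
    have hD' : MeasurableSet[G' n] (SX n ⁻¹' C) := hSXG' n hC
    rw [hφdef n a _ hDc, hφ' n a _ hD']
    calc ∫⁻ ω in SX n ⁻¹' C, φ n a (s - S n ω, X n ω) ∂P
        = ∫⁻ p in C, φ n a (s - p.1, p.2) ∂(P.map (SX n)) :=
          (setLIntegral_map hC hg (hSXm n)).symm
      _ = ∫⁻ p in C, φ n a (s - p.1, p.2) ∂(P'.map (SX n)) := by rw [hmap]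
      _ = ∫⁻ ω in SX n ⁻¹' C, φ n a (s - S n ω, X n ω) ∂P' :=
          setLIntegral_map hC hg (hSXm n)
  -- the base case: the distribution of `(S 0, X 0)` is the point mass at `(0, x)`
  have base : P.map (SX 0) = P'.map (SX 0) := by
    have hS0 : ∀ ω, S 0 ω = T 0 ω := fun ω => by rw [hS 0 ω, Finset.sum_range_one]
    have key : ∀ (μ : Measure Ω) [IsProbabilityMeasure μ],
        μ {ω | T 0 ω = 0 ∧ X 0 ω = x} = 1 → ∀ C : Set (ℝ × Ehat), MeasurableSet C →
        μ.map (SX 0) C = if ((0 : ℝ), x) ∈ C then 1 else 0 := by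
      intro μ _ hμ C hC
      rw [Measure.map_apply (hSXm 0) hC]
      have hsx : ∀ ω, ω ∈ {ω | T 0 ω = 0 ∧ X 0 ω = x} → SX 0 ω = ((0 : ℝ), x) := by
        intro ω hω
        have h1 : S 0 ω = 0 := by rw [hS0 ω, hω.1]
        show (S 0 ω, X 0 ω) = ((0 : ℝ), x)
        rw [h1, hω.2]
      by_cases hx : ((0 : ℝ), x) ∈ C
      · rw [if_pos hx]
        refine le_antisymm prob_le_one ?_
        calc (1 : ℝ≥0∞) = μ {ω | T 0 ω = 0 ∧ X 0 ω = x} := hμ.symm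
          _ ≤ μ (SX 0 ⁻¹' C) := measure_mono fun ω hω => by
              simp only [Set.mem_preimage, hsx ω hω]; exact hx
      · rw [if_neg hx]
        have hsub : {ω | T 0 ω = 0 ∧ X 0 ω = x} ⊆ (SX 0 ⁻¹' C)ᶜ := by
          intro ω hω hmem
          rw [Set.mem_preimage, hsx ω hω] at hmem
          exact hx hmem
        have h1 : μ ((SX 0 ⁻¹' C)ᶜ) = 1 :=
          le_antisymm prob_le_one (hμ ▸ measure_mono hsub)
        have h2 := measure_add_measure_compl (μ := μ) (hSXm 0 hC)
        rw [h1, measure_univ] at h2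
        have h3 : μ (SX 0 ⁻¹' C) + 1 = 0 + 1 := by rw [h2, zero_add]
        exact WithTop.add_right_cancel ENNReal.one_ne_top h3
    ext C hC
    rw [key P hinit C hC, key P' hinit' C hC]
  -- the kernel step
  have stepK : ∀ n, (∀ a, (P.restrict {ω | Act n ω = a}).map (SX n) =
        (P'.restrict {ω | Act n ω = a}).map (SX n)) →
      P.map (SX (n + 1)) = P'.map (SX (n + 1)) := by
    intro n hI
    have hip : IsProbabilityMeasure (P.map (SX (n + 1))) :=
      Measure.isProbabilityMeasure_map (hSXm (n + 1)).aemeasurable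
    have hip' : IsProbabilityMeasure (P'.map (SX (n + 1))) :=
      Measure.isProbabilityMeasure_map (hSXm (n + 1)).aemeasurable
    refine ext_prod_real _ _ ?_
    intro t B hB
    rw [Measure.map_apply (hSXm (n + 1)) (measurableSet_Iic.prod hB),
        Measure.map_apply (hSXm (n + 1)) (measurableSet_Iic.prod hB)]
    have hpre : SX (n + 1) ⁻¹' (Set.Iic t ×ˢ B) =
        {ω | S (n + 1) ω ≤ t ∧ X (n + 1) ω ∈ B} := by
      ext ω
      simp only [Set.mem_preimage, Set.mem_prod, Set.mem_Iic, Set.mem_setOf_eq, hSXdef]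
    rw [hpre]
    -- approximating sets
    set Am : ℕ → Set Ω :=
      fun m => {ω | T (n + 1) ω ≤ t - dy m (S n ω) ∧ X (n + 1) ω ∈ B} with hAmdef
    set Dm : ℕ → ℤ → Set Ω := fun m k => {ω | ⌊(2 : ℝ) ^ m * S n ω⌋ = k} with hDmdef
    have hDm_meas : ∀ m k, MeasurableSet (Dm m k) := fun m k =>
      measurable_dy_comp (hSm n) m (measurableSet_singleton k)
    have hDmGn : ∀ m k, MeasurableSet[G n] (Dm m k) := fun m k =>
      measurable_dy_comp (hSGn n) m (measurableSet_singleton k)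
    set Rm : ℕ → ℤ → Set Ω :=
      fun m k => {ω | T (n + 1) ω ≤ t - (k : ℝ) / 2 ^ m ∧ X (n + 1) ω ∈ B} with hRmdef
    have hRm_meas : ∀ m k, MeasurableSet (Rm m k) := fun m k =>
      (measurableSet_le (hT (n + 1)) measurable_const).inter (hX (n + 1) hB)
    have hdecomp : ∀ m, Am m = ⋃ k : ℤ, (Dm m k ∩ Rm m k) := by
      intro m
      ext ω
      simp only [hAmdef, hDmdef, hRmdef, Set.mem_iUnion, Set.mem_inter_iff, Set.mem_setOf_eq]
      constructor
      · rintro ⟨h1, h2⟩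
        refine ⟨⌊(2 : ℝ) ^ m * S n ω⌋, rfl, ?_, h2⟩
        rwa [show ((⌊(2 : ℝ) ^ m * S n ω⌋ : ℤ) : ℝ) / 2 ^ m = dy m (S n ω) from rfl]
      · rintro ⟨k, hk, h1, h2⟩
        refine ⟨?_, h2⟩
        have hdk : dy m (S n ω) = (k : ℝ) / 2 ^ m := by rw [dy, hk]
        rwa [hdk]
    have hdisj : ∀ m, Pairwise (Function.onFun Disjoint fun k : ℤ => Dm m k ∩ Rm m k) := by
      intro m k k' hkk'
      refine Set.disjoint_left.mpr ?_
      rintro ω ⟨hk, _⟩ ⟨hk', _⟩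
      exact hkk' (hk.symm.trans hk')
    -- identify the measure of each approximating set
    have key : ∀ (μ : Measure Ω),
        (∀ τ B', MeasurableSet B' → ∀ D, MeasurableSet[G n] D →
          μ (D ∩ {ω | T (n + 1) ω ≤ τ ∧ X (n + 1) ω ∈ B'}) =
            ∫⁻ ω in D, Qhat τ (X n ω) (Act n ω) B' ∂μ) →
        ∀ m, μ (Am m) = ∑' k : ℤ, ∑' a : A,
          ∫⁻ p in {p : ℝ × Ehat | ⌊(2 : ℝ) ^ m * p.1⌋ = k},
            Qhat (t - (k : ℝ) / 2 ^ m) p.2 a B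
            ∂((μ.restrict {ω | Act n ω = a}).map (SX n)) := by
      intro μ hkerμ m
      rw [hdecomp m, measure_iUnion (hdisj m)
        (fun k => (hDm_meas m k).inter (hRm_meas m k))]
      refine tsum_congr fun k => ?_
      rw [hkerμ (t - (k : ℝ) / 2 ^ m) B hB (Dm m k) (hDmGn m k)]
      have hDk : Dm m k = ⋃ a : A, (Dm m k ∩ {ω | Act n ω = a}) := by
        ext ω
        constructor
        · intro h
          exact Set.mem_iUnion.mpr ⟨Act n ω, h, rfl⟩
        · intro h
          obtain ⟨a, ha, _⟩ := Set.mem_iUnion.mp h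
          exact ha
      have hActa : ∀ a : A, MeasurableSet {ω | Act n ω = a} :=
        fun a => hAct n (measurableSet_singleton a)
      have hdisjA : Pairwise (Function.onFun Disjoint
          fun a : A => Dm m k ∩ {ω | Act n ω = a}) := by
        intro a a' haa'
        refine Set.disjoint_left.mpr ?_
        rintro ω ⟨_, ha⟩ ⟨_, ha'⟩
        exact haa' (ha.symm.trans ha')
      calc ∫⁻ ω in Dm m k, Qhat (t - (k : ℝ) / 2 ^ m) (X n ω) (Act n ω) B ∂μ
          = ∑' a : A, ∫⁻ ω in Dm m k ∩ {ω | Act n ω = a},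
              Qhat (t - (k : ℝ) / 2 ^ m) (X n ω) (Act n ω) B ∂μ := by
            conv_lhs => rw [hDk]
            exact lintegral_iUnion (fun a => (hDm_meas m k).inter (hActa a)) hdisjA _
        _ = ∑' a : A, ∫⁻ ω in Dm m k ∩ {ω | Act n ω = a},
              Qhat (t - (k : ℝ) / 2 ^ m) (X n ω) a B ∂μ := by
            refine tsum_congr fun a => setLIntegral_congr_fun
              ((hDm_meas m k).inter (hActa a)) (fun ω hω => ?_)
            rw [hω.2]
        _ = ∑' a : A, ∫⁻ ω in Dm m k,
              Qhat (t - (k : ℝ) / 2 ^ m) (X n ω) a B ∂(μ.restrict {ω | Act n ω = a}) := by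
            refine tsum_congr fun a => ?_
            rw [Measure.restrict_restrict (hDm_meas m k)]
        _ = ∑' a : A, ∫⁻ p in {p : ℝ × Ehat | ⌊(2 : ℝ) ^ m * p.1⌋ = k},
              Qhat (t - (k : ℝ) / 2 ^ m) p.2 a B
              ∂((μ.restrict {ω | Act n ω = a}).map (SX n)) := by
            refine tsum_congr fun a => ?_
            have hCk : MeasurableSet {p : ℝ × Ehat | ⌊(2 : ℝ) ^ m * p.1⌋ = k} :=
              measurable_dy_comp measurable_fst m (measurableSet_singleton k)
            have hg : Measurable fun p : ℝ × Ehat => Qhat (t - (k : ℝ) / 2 ^ m) p.2 a B :=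
              ((Measure.measurable_coe hB).comp (hQmeas _)).comp
                (measurable_snd.prodMk measurable_const)
            exact (setLIntegral_map hCk hg (hSXm n)).symm
    have hPAm : ∀ m, P (Am m) = P' (Am m) := by
      intro m
      rw [key P (hker n) m, key P' (hker' n) m]
      exact tsum_congr fun k => tsum_congr fun a => by rw [hI a]
    have hAnti : Antitone Am := by
      intro m m' h ω hω
      simp only [hAmdef, Set.mem_setOf_eq] at hω ⊢
      have hdy := dy_monotone (S n ω) h
      exact ⟨hω.1.trans (by simp only [] at hdy ⊢; linarith), hω.2⟩
    have hAm_meas : ∀ m, MeasurableSet (Am m) := fun m => by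
      rw [hdecomp m]
      exact MeasurableSet.iUnion fun k => (hDm_meas m k).inter (hRm_meas m k)
    have hSsucc : ∀ ω, S (n + 1) ω = S n ω + T (n + 1) ω := fun ω => by
      rw [hS (n + 1) ω, Finset.sum_range_succ, ← hS n ω]
    have hiInter : ⋂ m, Am m = {ω | S (n + 1) ω ≤ t ∧ X (n + 1) ω ∈ B} := by
      ext ω
      simp only [Set.mem_iInter, hAmdef, Set.mem_setOf_eq]
      constructor
      · intro h
        refine ⟨?_, (h 0).2⟩
        rw [hSsucc ω]
        refine le_of_forall_pos_lt_add fun ε hε => ?_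
        obtain ⟨m, hm⟩ := exists_pow_lt_of_lt_one hε (by norm_num : (1 : ℝ) / 2 < 1)
        have h1 := (h m).1
        have h2 := lt_dy_add m (S n ω)
        linarith
      · rintro ⟨h1, h2⟩ m
        refine ⟨?_, h2⟩
        have h3 := dy_le m (S n ω)
        rw [hSsucc ω] at h1
        linarith
    have ht1 : Tendsto (fun m => P (Am m)) atTop
        (𝓝 (P {ω | S (n + 1) ω ≤ t ∧ X (n + 1) ω ∈ B})) := by
      have h := tendsto_measure_iInter_atTop (μ := P)
        (fun m => (hAm_meas m).nullMeasurableSet) hAnti ⟨0, measure_ne_top _ _⟩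
      rwa [hiInter] at h
    have ht2 : Tendsto (fun m => P' (Am m)) atTop
        (𝓝 (P' {ω | S (n + 1) ω ≤ t ∧ X (n + 1) ω ∈ B})) := by
      have h := tendsto_measure_iInter_atTop (μ := P')
        (fun m => (hAm_meas m).nullMeasurableSet) hAnti ⟨0, measure_ne_top _ _⟩
      rwa [hiInter] at h
    have hfun : (fun m => P (Am m)) = fun m => P' (Am m) := funext hPAm
    rw [hfun] at ht1
    exact tendsto_nhds_unique ht1 ht2
  -- the main induction
  have main : ∀ n a, (P.restrict {ω | Act n ω = a}).map (SX n) =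
      (P'.restrict {ω | Act n ω = a}).map (SX n) := by
    intro n
    induction n with
    | zero => exact stepφ 0 base
    | succ n ih => exact stepφ (n + 1) (stepK n ih)
  -- conclusion
  intro n B hB a t
  have hfin : ∀ (μ : Measure Ω), μ {ω | X n ω ∈ B ∧ Act n ω = a ∧ S n ω ≤ t} =
      ((μ.restrict {ω | Act n ω = a}).map (SX n)) (Set.Iic t ×ˢ B) := by
    intro μ
    rw [Measure.map_apply (hSXm n) (measurableSet_Iic.prod hB),
        Measure.restrict_apply (hSXm n (measurableSet_Iic.prod hB))]
    congr 1
    ext ω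
    simp only [Set.mem_inter_iff, Set.mem_preimage, Set.mem_prod, Set.mem_Iic,
      Set.mem_setOf_eq, hSXdef]
    tauto
  rw [hfin P, hfin P', main n a]
end

section
/- (Stopping times induced by the induced policy recover the original stopping time cost structure.) Let $\tau$ be a stopping time for the marked point process $(T_n,X_n)$ with jump times $S_n$, and let $\pi_\tau=\{d_n^\tau\}$ be the induced deterministic policy with $d_n^\tau(s,h_n^0)=\mathbf{1}_{B_n^\tau}(h_n)\mathbf{1}_{(0,\infty)}(s)$ where $B_n^\tau$ is the Borel set with $\{\tau=n\}=\{Y_n\in B_n^\tau\}$. Let $\tau_{\pi_\tau}^s$ be the stopping time induced by $\pi_\tau$ and horizon $s$. Then pointwise: $\mathbf{1}_{\{\tau_{\pi_\tau}^s=n\}}=\mathbf{1}_{[0,s)}(S_n)\mathbf{1}_{\{\tau=n\}}$ for each $n\ge 0$, and $\mathbf{1}_{\{\tau_{\pi_\tau}^s=\infty\}}=\mathbf{1}_{\{\tau=\infty\}}+\sum_{k=0}^\infty\mathbf{1}_{\{\tau=k\}}\mathbf{1}_{[s,\infty)}(S_k)$. -/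
open MeasureTheory Set
open scoped ENNReal

/-- Let `τ` be a stopping time of the marked point process on the
canonical space `Ω = E × (ℝ × E)^∞`, with `{τ = n} = {Y n ∈ B n}` for Borel sets `B n` of
histories.  The policy `π_τ = {d n}`, `d n (s', h⁰) = 𝟙_{B n}(h) 𝟙_{(0,∞)}(s')`, induces
for each horizon `s` the stopping time
`τ' = inf {n : d n (s - S n, Y n ^ 0) = 1} = inf {n : Y n ∈ B n ∧ 0 < s - S n}`.
Then pointwise (on trajectories with nonnegative sojourn times):
`𝟙{τ' = n} = 𝟙_{[0,s)}(S n) · 𝟙{τ = n}` and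
`𝟙{τ' = ∞} = 𝟙{τ = ∞} + ∑_k 𝟙{τ = k} · 𝟙_{[s,∞)}(S k)`. -/
theorem induced_policy_recovers_stopping_time
    {E : Type*} [MeasurableSpace E]
    (T : ℕ → (E × (ℕ → ℝ × E)) → ℝ) (hT : ∀ n ω, T n ω = if n = 0 then 0 else (ω.2 (n - 1)).1)
    (S : ℕ → (E × (ℕ → ℝ × E)) → ℝ)
    (hS : ∀ n ω, S n ω = ∑ k ∈ Finset.range (n + 1), T k ω)
    (Y : (n : ℕ) → (E × (ℕ → ℝ × E)) → E × (Fin n → ℝ × E))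
    (hY : ∀ n ω, Y n ω = (ω.1, fun k : Fin n => ω.2 k))
    (τ : (E × (ℕ → ℝ × E)) → ℕ∞)
    (B : (n : ℕ) → Set (E × (Fin n → ℝ × E)))
    (hBmeas : ∀ n, MeasurableSet (B n))
    (hB : ∀ n : ℕ, {ω | τ ω = (n : ℕ∞)} = Y n ⁻¹' B n)
    (s : ℝ)
    -- the stopping time induced by the policy `π_τ` and the horizon `s`
    (τ' : (E × (ℕ → ℝ × E)) → ℕ∞)
    (hτ' : ∀ ω, τ' ω = sInf ((↑) '' {n : ℕ | Y n ω ∈ B n ∧ 0 < s - S n ω})) :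
    ∀ ω : E × (ℕ → ℝ × E), (∀ k, 0 ≤ T k ω) →
      (∀ n : ℕ,
        ({ω' | τ' ω' = (n : ℕ∞)} : Set (E × (ℕ → ℝ × E))).indicator (fun _ => (1 : ℝ)) ω =
          (Set.Ico (0 : ℝ) s).indicator (fun _ => (1 : ℝ)) (S n ω) *
            ({ω' | τ ω' = (n : ℕ∞)} : Set (E × (ℕ → ℝ × E))).indicator (fun _ => (1 : ℝ)) ω) ∧
        ({ω' | τ' ω' = ⊤} : Set (E × (ℕ → ℝ × E))).indicator (fun _ => (1 : ℝ)) ω =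
          ({ω' | τ ω' = ⊤} : Set (E × (ℕ → ℝ × E))).indicator (fun _ => (1 : ℝ)) ω +
            ∑' k : ℕ,
              ({ω' | τ ω' = (k : ℕ∞)} : Set (E × (ℕ → ℝ × E))).indicator (fun _ => (1 : ℝ)) ω *
                (Set.Ici s).indicator (fun _ => (1 : ℝ)) (S k ω) := by
  intro ω hT0
  have hmem : ∀ n : ℕ, Y n ω ∈ B n ↔ τ ω = (n : ℕ∞) := by
    intro n
    constructor
    · intro hh
      have : ω ∈ Y n ⁻¹' B n := hh
      rw [← hB n] at this; exact this
    · intro hh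
      have : ω ∈ {ω | τ ω = (n : ℕ∞)} := hh
      rw [hB n] at this; exact this
  have hSnn : ∀ n, 0 ≤ S n ω := by
    intro n; rw [hS]; exact Finset.sum_nonneg fun k _ => hT0 k
  by_cases htop : τ ω = ⊤
  · -- τ ω = ⊤
    have hA : {n : ℕ | Y n ω ∈ B n ∧ 0 < s - S n ω} = ∅ := by
      ext n; simp only [Set.mem_setOf_eq, Set.mem_empty_iff_false, iff_false]
      rintro ⟨h1, _⟩
      rw [hmem n, htop] at h1
      exact (ENat.coe_ne_top n) h1.symm
    have hτ't : τ' ω = ⊤ := by rw [hτ' ω, hA, Set.image_empty, sInf_empty]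
    constructor
    · intro n
      rw [Set.indicator_of_notMem (s := {ω' | τ' ω' = (n : ℕ∞)})
          (fun hc => (ENat.coe_ne_top n) ((hτ't ▸ hc : (⊤:ℕ∞) = n)).symm),
        Set.indicator_of_notMem (s := {ω' | τ ω' = (n : ℕ∞)})
          (fun hc => (ENat.coe_ne_top n) ((htop ▸ hc : (⊤:ℕ∞) = n)).symm), mul_zero]
    · rw [Set.indicator_of_mem (s := {ω' | τ' ω' = ⊤}) hτ't,
        Set.indicator_of_mem (s := {ω' | τ ω' = ⊤}) htop]
      have hzero : ∀ k : ℕ,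
          ({ω' | τ ω' = (k : ℕ∞)} : Set (E × (ℕ → ℝ × E))).indicator (fun _ => (1 : ℝ)) ω *
            (Set.Ici s).indicator (fun _ => (1 : ℝ)) (S k ω) = 0 := by
        intro k
        rw [Set.indicator_of_notMem (s := {ω' | τ ω' = (k : ℕ∞)})
          (fun hc => (ENat.coe_ne_top k) ((htop ▸ hc : (⊤:ℕ∞) = k)).symm), zero_mul]
      simp [hzero]
  · obtain ⟨m, hm⟩ := WithTop.ne_top_iff_exists.mp htop
    have h : τ ω = (m : ℕ∞) := hm.symm
    by_cases hsm : S m ω < s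
    · have hA : {n : ℕ | Y n ω ∈ B n ∧ 0 < s - S n ω} = {m} := by
        ext n
        simp only [Set.mem_setOf_eq, Set.mem_singleton_iff, hmem, h, sub_pos]
        constructor
        · rintro ⟨h1, _⟩; exact_mod_cast h1.symm
        · rintro rfl; exact ⟨rfl, hsm⟩
      have hτ'm : τ' ω = (m : ℕ∞) := by
        rw [hτ' ω, hA, Set.image_singleton, csInf_singleton]
      constructor
      · intro n
        by_cases hnm : n = m
        · subst hnm
          rw [Set.indicator_of_mem (s := {ω' | τ' ω' = (n : ℕ∞)}) hτ'm,
            Set.indicator_of_mem (s := {ω' | τ ω' = (n : ℕ∞)}) h,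
            Set.indicator_of_mem (s := Set.Ico 0 s) ⟨hSnn n, hsm⟩, mul_one]
        · rw [Set.indicator_of_notMem (s := {ω' | τ' ω' = (n : ℕ∞)})
              (fun hc => hnm (Nat.cast_injective (hτ'm ▸ hc : (m:ℕ∞) = n)).symm),
            Set.indicator_of_notMem (s := {ω' | τ ω' = (n : ℕ∞)})
              (fun hc => hnm (Nat.cast_injective (h ▸ hc : (m:ℕ∞) = n)).symm), mul_zero]
      · rw [Set.indicator_of_notMem (s := {ω' | τ' ω' = ⊤})
            (fun hc => (ENat.coe_ne_top m) (hτ'm ▸ hc : (m:ℕ∞) = ⊤)),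
          Set.indicator_of_notMem (s := {ω' | τ ω' = ⊤})
            (fun hc => (ENat.coe_ne_top m) (h ▸ hc : (m:ℕ∞) = ⊤))]
        have hzero : ∀ k : ℕ,
            ({ω' | τ ω' = (k : ℕ∞)} : Set (E × (ℕ → ℝ × E))).indicator (fun _ => (1 : ℝ)) ω *
              (Set.Ici s).indicator (fun _ => (1 : ℝ)) (S k ω) = 0 := by
          intro k
          by_cases hkm : k = m
          · subst hkm
            rw [Set.indicator_of_notMem (s := Set.Ici s) (not_le.mpr hsm), mul_zero]
          · rw [Set.indicator_of_notMem (s := {ω' | τ ω' = (k : ℕ∞)})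
              (fun hc => hkm (Nat.cast_injective (h ▸ hc : (m:ℕ∞) = k)).symm), zero_mul]
        simp [hzero]
    · have hA : {n : ℕ | Y n ω ∈ B n ∧ 0 < s - S n ω} = ∅ := by
        ext n
        simp only [Set.mem_setOf_eq, Set.mem_empty_iff_false, iff_false, sub_pos, hmem, h]
        rintro ⟨h1, h2⟩
        have : n = m := by exact_mod_cast h1.symm
        exact hsm (this ▸ h2)
      have hτ't : τ' ω = ⊤ := by rw [hτ' ω, hA, Set.image_empty, sInf_empty]
      constructor
      · intro n
        rw [Set.indicator_of_notMem (s := {ω' | τ' ω' = (n : ℕ∞)})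
            (fun hc => (ENat.coe_ne_top n) ((hτ't ▸ hc : (⊤:ℕ∞) = n)).symm)]
        by_cases hnm : n = m
        · subst hnm
          rw [Set.indicator_of_notMem (s := Set.Ico 0 s) (fun hc => hsm hc.2), zero_mul]
        · rw [Set.indicator_of_notMem (s := {ω' | τ ω' = (n : ℕ∞)})
            (fun hc => hnm (Nat.cast_injective (h ▸ hc : (m:ℕ∞) = n)).symm), mul_zero]
      · rw [Set.indicator_of_mem (s := {ω' | τ' ω' = ⊤}) hτ't,
          Set.indicator_of_notMem (s := {ω' | τ ω' = ⊤})
            (fun hc => (ENat.coe_ne_top m) (h ▸ hc : (m:ℕ∞) = ⊤)), zero_add]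
        rw [tsum_eq_single m]
        · rw [Set.indicator_of_mem (s := {ω' | τ ω' = (m : ℕ∞)}) h,
            Set.indicator_of_mem (s := Set.Ici s) (not_lt.mp hsm), mul_one]
        · intro k hkm
          rw [Set.indicator_of_notMem (s := {ω' | τ ω' = (k : ℕ∞)})
            (fun hc => hkm (Nat.cast_injective (h ▸ hc : (m:ℕ∞) = k)).symm), zero_mul]
end
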